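/- arXiv:cs/0501069 — 2 statements merged into one kernel-verified Lean document; each statement's English description precedes it below -/
import Mathlib

section
/- Let λ_f > 0, r > 0 and α > 0 be real numbers and set λ_j = λ_f and λ_s = r·λ_f. Then the steady-state equation λ_j(1−w) + λ_f(1−w)² − λ_f w² − αλ_s w = 0 has a unique real solution, namely w₁ = 2/(3 + rα), and this solution satisfies 0 < w₁ < 1. -/
/-- Steady state of the master equation for wrong first-successor pointers:
with `λ_j = λ_f` and `λ_s = r λ_f`, the equation
`λ_j(1-w) + λ_f(1-w)² - λ_f w² - α λ_s w = 0` has the unique real solution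
`w₁ = 2/(3 + rα)`, and `0 < w₁ < 1`. -/
theorem w_one_steady_state (lamf r α : ℝ) (hlf : 0 < lamf) (hr : 0 < r)
    (hα : 0 < α) (lamj lams : ℝ) (hlj : lamj = lamf) (hls : lams = r * lamf) :
    (∀ w : ℝ,
      lamj * (1 - w) + lamf * (1 - w) ^ 2 - lamf * w ^ 2 - α * lams * w = 0 ↔
        w = 2 / (3 + r * α)) ∧
    0 < 2 / (3 + r * α) ∧ 2 / (3 + r * α) < 1 := by
  have hD : 0 < 3 + r * α := by nlinarith
  refine ⟨fun w => ?_, div_pos two_pos hD, ?_⟩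
  · constructor
    · intro h
      rw [hlj, hls] at h
      have key : lamf * (2 - (3 + r * α) * w) = 0 := by nlinarith [h]
      have h2 : 2 - (3 + r * α) * w = 0 := by
        rcases mul_eq_zero.mp key with h' | h'
        · exact absurd h' hlf.ne'
        · exact h'
      field_simp
      linarith
    · intro h
      subst h
      rw [hlj, hls]
      field_simp
      ring
  · rw [div_lt_one hD]; nlinarith
end

section
/- Let A > 0, B ≥ 0 and s ≥ B be real numbers. Define f = [ (2A − B + s) − √((2A − B + s)² − 4A²) ] / (2A). Then: (i) the expression under the square root is nonnegative; (ii) f satisfies the steady-state balance equation A(1−f)² + B·f = s·f; and (iii) 0 < f ≤ 1, with f = 1 if and only if s = B. -/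
/-- Steady-state solution for the fraction of failed `k`-th fingers:
with `A > 0`, `B ≥ 0`, `s ≥ B` and
`f = ((2A - B + s) - √((2A - B + s)² - 4A²)) / (2A)`, we have
(i) the discriminant is nonnegative, (ii) `A(1-f)² + B f = s f`, and
(iii) `0 < f ≤ 1`, with `f = 1` iff `s = B`. -/
theorem f_k_steady_state (A B s : ℝ) (hA : 0 < A) (hB : 0 ≤ B) (hs : B ≤ s)
    (f : ℝ)
    (hf : f = ((2 * A - B + s) - Real.sqrt ((2 * A - B + s) ^ 2 - 4 * A ^ 2))
        / (2 * A)) :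
    0 ≤ (2 * A - B + s) ^ 2 - 4 * A ^ 2 ∧
    A * (1 - f) ^ 2 + B * f = s * f ∧
    0 < f ∧ f ≤ 1 ∧ (f = 1 ↔ s = B) := by
  set C : ℝ := 2 * A - B + s with hC
  have hD : 0 ≤ C ^ 2 - 4 * A ^ 2 := by nlinarith
  set t : ℝ := Real.sqrt (C ^ 2 - 4 * A ^ 2) with htdef
  have ht0 : 0 ≤ t := Real.sqrt_nonneg _
  have ht2 : t ^ 2 = C ^ 2 - 4 * A ^ 2 := Real.sq_sqrt hD
  have h2A : (0:ℝ) < 2 * A := by linarith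
  have h1 : 2 * A * f = C - t := by
    rw [hf]; field_simp
  have htC : t < C := by nlinarith
  have hfpos : 0 < f := by
    rw [hf]; apply div_pos; linarith; exact h2A
  have htsB : s - B ≤ t := by nlinarith
  have hfle : f ≤ 1 := by
    rw [hf, div_le_one h2A]; linarith [hC]
  refine ⟨hD, ?_, hfpos, hfle, ?_, ?_⟩
  · have h4 : 4 * A * (A * (1 - f) ^ 2 + B * f - s * f) = 0 := by
      linear_combination (2 * A * f - C - t) * h1 + ht2
    have hne : (4 : ℝ) * A ≠ 0 := by positivity
    have := (mul_eq_zero.mp h4).resolve_left hne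
    linarith
  · intro hf1
    have : 2 * A = C - t := by rw [← h1, hf1, mul_one]
    have hts : t = s - B := by rw [hC] at this; linarith
    nlinarith [ht2]
  · intro hsB
    have hC0 : C = 2 * A := by rw [hC, hsB]; ring
    have ht00 : t = 0 := by
      have hz : C ^ 2 - 4 * A ^ 2 = 0 := by rw [hC0]; ring
      rw [htdef, hz, Real.sqrt_zero]
    rw [hf, ht00, sub_zero, hC0, div_self (ne_of_gt h2A)]
end
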